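/- arXiv:2512.18978 — 3 statements merged into one kernel-verified Lean document; each statement's English description precedes it below -/
import Mathlib

section
/- Let O = O1 ∪ {o_k}, where O1 is a finite set with at least two elements, o_k ∉ O1, the fuzzy similarity relation r satisfies r(x,y) > 0 for all x, y ∈ O1 and r(x, o_k) = r(o_k, x) = 0 for all x ∈ O1. Then for every o_i ∈ O1 one has FRE(o_i) > FRE(o_k), i.e. the fuzzy relative entropy of any object of the dense cluster O1 strictly exceeds the fuzzy relative entropy of the isolated object o_k. -/
open Finset

variable {α : Type*} [DecidableEq α]

/-- Fuzzy cardinality of `x` within `S`: `|[x]|_S = ∑_{y ∈ S} r x y`. -/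
noncomputable def fuzzyCard (r : α → α → ℝ) (S : Finset α) (x : α) : ℝ :=
  ∑ y ∈ S, r x y

/-- Fuzzy entropy of `S`: `FE(S) = -(1/|S|) ∑_{x ∈ S} log₂(|[x]|_S / |S|)`. -/
noncomputable def fuzzyEntropy (r : α → α → ℝ) (S : Finset α) : ℝ :=
  -(1 / (S.card : ℝ)) * ∑ x ∈ S, Real.logb 2 (fuzzyCard r S x / (S.card : ℝ))

lemma one_le_fuzzyCard (r : α → α → ℝ) (S : Finset α) (x : α) (hx : x ∈ S)
    (hr : ∀ a b, 0 ≤ r a b) (hrefl : ∀ a, r a a = 1) : 1 ≤ fuzzyCard r S x := by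
  have := Finset.single_le_sum (f := r x) (fun y _ => hr x y) hx
  simpa [fuzzyCard, hrefl] using this

/-- For a dense cluster `O1` and an isolated point `ok`,
the fuzzy relative entropy `FRE(x) = FE(O \ {x}) / FE(O) + 1/|O|` of any cluster
point `oi ∈ O1` strictly exceeds that of the isolated point `ok`. -/
theorem fre_cluster_gt_isolated (r : α → α → ℝ) (O1 : Finset α) (ok : α)
    (hcard : 2 ≤ O1.card) (hok : ok ∉ O1)
    (hsymm : ∀ x y, r x y = r y x)
    (hrefl : ∀ x, r x x = 1)
    (hrange : ∀ x y, r x y ∈ Set.Icc (0 : ℝ) 1)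
    (hpos : ∀ x ∈ O1, ∀ y ∈ O1, 0 < r x y)
    (hzero : ∀ x ∈ O1, r x ok = 0 ∧ r ok x = 0) :
    ∀ oi ∈ O1,
      fuzzyEntropy r ((insert ok O1).erase ok) / fuzzyEntropy r (insert ok O1)
          + 1 / (((insert ok O1).card : ℝ))
        < fuzzyEntropy r ((insert ok O1).erase oi) / fuzzyEntropy r (insert ok O1)
          + 1 / (((insert ok O1).card : ℝ)) := by
  intro oi hoi
  have hr0 : ∀ a b, 0 ≤ r a b := fun a b => (hrange a b).1
  have hr1 : ∀ a b, r a b ≤ 1 := fun a b => (hrange a b).2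
  have hne : ok ≠ oi := fun h => hok (h ▸ hoi)
  have hA : (insert ok O1).erase ok = O1 := Finset.erase_insert hok
  have hA' : (insert ok O1).erase oi = insert ok (O1.erase oi) :=
    Finset.erase_insert_of_ne hne
  have hokE : ok ∉ O1.erase oi := fun h => hok (Finset.mem_of_mem_erase h)
  have hcardB : (insert ok O1).card = O1.card + 1 := Finset.card_insert_of_notMem hok
  have hcardA' : (insert ok (O1.erase oi)).card = O1.card := by
    rw [Finset.card_insert_of_notMem hokE, Finset.card_erase_of_mem hoi]
    omega
  have hnR : (0:ℝ) < (O1.card : ℝ) := by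
    have : 0 < O1.card := by omega
    exact_mod_cast this
  have hNE : (O1.erase oi).Nonempty := by
    rw [← Finset.card_pos, Finset.card_erase_of_mem hoi]; omega
  -- Step 1: fuzzyEntropy of the full set is positive
  have hFEB : 0 < fuzzyEntropy r (insert ok O1) := by
    set B := insert ok O1 with hB
    have hBcardR : (0:ℝ) < (B.card : ℝ) := by
      rw [hcardB]; push_cast; linarith
    have hsum : ∑ x ∈ B, Real.logb 2 (fuzzyCard r B x / (B.card:ℝ)) < 0 := by
      apply Finset.sum_neg _ ⟨ok, Finset.mem_insert_self _ _⟩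
      intro x hx
      have h1 : 1 ≤ fuzzyCard r B x := one_le_fuzzyCard r B x hx hr0 hrefl
      have hlt : fuzzyCard r B x < (B.card : ℝ) := by
        have hlt' : fuzzyCard r B x < ∑ _y ∈ B, (1:ℝ) := by
          apply Finset.sum_lt_sum (fun y _ => hr1 x y)
          rcases Finset.mem_insert.1 hx with rfl | hx1
          · obtain ⟨y, hy⟩ := Finset.card_pos.1 (by omega : 0 < O1.card)
            exact ⟨y, Finset.mem_insert_of_mem hy, by rw [(hzero y hy).2]; norm_num⟩
          · exact ⟨ok, Finset.mem_insert_self _ _, by rw [(hzero x hx1).1]; norm_num⟩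
        simpa using hlt'
      apply Real.logb_neg one_lt_two
      · positivity
      · rw [div_lt_one hBcardR]; exact hlt
    have h1N : 0 < 1 / (B.card : ℝ) := by positivity
    have heq : -(1 / (B.card:ℝ)) * (∑ x ∈ B, Real.logb 2 (fuzzyCard r B x / (B.card:ℝ)))
        = (1 / (B.card:ℝ)) * (-(∑ x ∈ B, Real.logb 2 (fuzzyCard r B x / (B.card:ℝ)))) := by
      ring
    rw [fuzzyEntropy, heq]
    exact mul_pos h1N (neg_pos.mpr hsum)
  -- Step 2: FE(O1) < FE(insert ok (O1.erase oi))
  have hmain : fuzzyEntropy r O1 < fuzzyEntropy r (insert ok (O1.erase oi)) := by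
    set E := O1.erase oi with hE
    set A := insert ok E with hAdef
    set nn := (O1.card : ℝ) with hnn
    -- compare the log-sums
    have hsumlt : ∑ x ∈ A, Real.logb 2 (fuzzyCard r A x / nn)
        < ∑ x ∈ O1, Real.logb 2 (fuzzyCard r O1 x / nn) := by
      rw [hAdef, Finset.sum_insert hokE,
        ← Finset.add_sum_erase O1 (fun x => Real.logb 2 (fuzzyCard r O1 x / nn)) hoi]
      apply add_lt_add
      · -- isolated point term vs oi term
        have hfcok : fuzzyCard r A ok = 1 := by
          rw [fuzzyCard, hAdef, Finset.sum_insert hokE, hrefl,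
            Finset.sum_eq_zero (fun y hy => (hzero y (Finset.mem_of_mem_erase hy)).2)]
          ring
        have hfcoi : 1 < fuzzyCard r O1 oi := by
          obtain ⟨y, hy⟩ := hNE
          have hyO : y ∈ O1 := Finset.mem_of_mem_erase hy
          have h1 : fuzzyCard r O1 oi = r oi oi + ∑ z ∈ E, r oi z :=
            (Finset.add_sum_erase O1 (r oi) hoi).symm
          have h2 : r oi y ≤ ∑ z ∈ E, r oi z :=
            Finset.single_le_sum (fun z _ => hr0 oi z) hy
          have h3 : 0 < r oi y := hpos oi hoi y hyO
          rw [h1, hrefl]; linarith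
        rw [hfcok]
        apply Real.logb_lt_logb one_lt_two (by positivity)
        gcongr
      · -- termwise comparison on E
        apply Finset.sum_lt_sum_of_nonempty hNE
        intro x hx
        have hxO : x ∈ O1 := Finset.mem_of_mem_erase hx
        have hfc2 : fuzzyCard r A x = ∑ z ∈ E, r x z := by
          rw [fuzzyCard, hAdef, Finset.sum_insert hokE, (hzero x hxO).1, zero_add]
        have hfc1 : fuzzyCard r O1 x = r x oi + ∑ z ∈ E, r x z :=
          (Finset.add_sum_erase O1 (r x) hoi).symm
        have hlt : fuzzyCard r A x < fuzzyCard r O1 x := by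
          rw [hfc1, hfc2]
          have := hpos x hxO oi hoi
          linarith
        have hge1 : 1 ≤ fuzzyCard r A x :=
          one_le_fuzzyCard r A x (by rw [hAdef]; exact Finset.mem_insert_of_mem hx) hr0 hrefl
        apply Real.logb_lt_logb one_lt_two (by positivity)
        gcongr
      done
    -- convert to entropies
    rw [fuzzyEntropy, fuzzyEntropy, hcardA']
    have h1n : 0 < 1 / nn := by positivity
    nlinarith [mul_pos h1n (sub_pos.mpr hsumlt)]
  rw [hA, hA']
  apply add_lt_add_of_lt_of_le ?_ le_rfl
  gcongr
end

section
/- Let O = O1 ∪ {o_k}, where O1 is a finite set with at least two elements, o_k ∉ O1, the fuzzy similarity relation r satisfies r(x,y) > 0 for all x, y ∈ O1 and r(x, o_k) = r(o_k, x) = 0 for all x ∈ O1. Then for every o_i ∈ O1, the fuzzy entropy of O after removing o_k is strictly smaller than the fuzzy entropy of O after removing o_i: FE(O \ {o_k}) < FE(O \ {o_i}). Equivalently, removing the isolated object o_k from O decreases the fuzzy entropy more than removing any object o_i of the dense cluster O1. -/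
open Finset

variable {α : Type*} [DecidableEq α]

/-- Removing the isolated point `ok` from `O = O1 ∪ {ok}` yields a
strictly smaller fuzzy entropy than removing any cluster point `oi ∈ O1`. -/
theorem fe_erase_isolated_lt_erase_cluster (r : α → α → ℝ) (O1 : Finset α) (ok : α)
    (hcard : 2 ≤ O1.card) (hok : ok ∉ O1)
    (hsymm : ∀ x y, r x y = r y x)
    (hrefl : ∀ x, r x x = 1)
    (hrange : ∀ x y, r x y ∈ Set.Icc (0 : ℝ) 1)
    (hpos : ∀ x ∈ O1, ∀ y ∈ O1, 0 < r x y)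
    (hzero : ∀ x ∈ O1, r x ok = 0 ∧ r ok x = 0) :
    ∀ oi ∈ O1,
      fuzzyEntropy r ((insert ok O1).erase ok)
        < fuzzyEntropy r ((insert ok O1).erase oi) := by
  intro oi hoi
  have hne : ok ≠ oi := fun h => hok (h ▸ hoi)
  have hA : (insert ok O1).erase ok = O1 := Finset.erase_insert hok
  have hB : (insert ok O1).erase oi = insert ok (O1.erase oi) :=
    Finset.erase_insert_of_ne hne
  have hoknotin : ok ∉ O1.erase oi := fun h => hok (Finset.mem_of_mem_erase h)
  set n : ℕ := O1.card with hn
  have hn2 : (2:ℝ) ≤ (n:ℝ) := by exact_mod_cast hcard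
  have hnpos : (0:ℝ) < (n:ℝ) := by linarith
  have hcardB : (insert ok (O1.erase oi)).card = n := by
    rw [Finset.card_insert_of_notMem hoknotin, Finset.card_erase_of_mem hoi]
    omega
  have herase_ne : (O1.erase oi).Nonempty := by
    rw [← Finset.card_pos, Finset.card_erase_of_mem hoi]; omega
  have hcard_ok : fuzzyCard r (insert ok (O1.erase oi)) ok = 1 := by
    rw [fuzzyCard, Finset.sum_insert hoknotin, hrefl]
    have : ∑ y ∈ O1.erase oi, r ok y = 0 :=
      Finset.sum_eq_zero fun y hy => (hzero y (Finset.mem_of_mem_erase hy)).2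
    rw [this, add_zero]
  have hcval : ∀ x, fuzzyCard r O1 x - r x oi = ∑ y ∈ O1.erase oi, r x y := by
    intro x
    rw [fuzzyCard, ← Finset.add_sum_erase O1 (fun y => r x y) hoi]; ring
  have hcard_x : ∀ x ∈ O1.erase oi,
      fuzzyCard r (insert ok (O1.erase oi)) x = fuzzyCard r O1 x - r x oi := by
    intro x hx
    have hxO1 : x ∈ O1 := Finset.mem_of_mem_erase hx
    rw [hcval]
    simp only [fuzzyCard, Finset.sum_insert hoknotin, (hzero x hxO1).1, zero_add]
  have hcpos : ∀ x ∈ O1, 0 < fuzzyCard r O1 x - r x oi := by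
    intro x hx
    rw [hcval]
    exact Finset.sum_pos (fun y hy => hpos x hx y (Finset.mem_of_mem_erase hy)) herase_ne
  have key : Real.logb 2 (1 / (n:ℝ)) +
      ∑ x ∈ O1.erase oi, Real.logb 2 ((fuzzyCard r O1 x - r x oi) / (n:ℝ))
      < ∑ x ∈ O1, Real.logb 2 (fuzzyCard r O1 x / (n:ℝ)) := by
    rw [← Finset.add_sum_erase O1 (fun x => Real.logb 2 (fuzzyCard r O1 x / (n:ℝ))) hoi]
    apply add_lt_add
    · apply Real.logb_lt_logb one_lt_two (by positivity)
      have h1 : (1:ℝ) < fuzzyCard r O1 oi := by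
        have := hcpos oi hoi
        rw [hrefl oi] at this
        linarith
      exact div_lt_div_of_pos_right h1 hnpos
    · apply Finset.sum_lt_sum_of_nonempty herase_ne
      intro x hx
      have hxO1 : x ∈ O1 := Finset.mem_of_mem_erase hx
      apply Real.logb_lt_logb one_lt_two
      · exact div_pos (hcpos x hxO1) hnpos
      · have := hpos x hxO1 oi hoi
        have : fuzzyCard r O1 x - r x oi < fuzzyCard r O1 x := by linarith
        exact div_lt_div_of_pos_right this hnpos
  have hsum2 : ∑ x ∈ O1.erase oi,
      Real.logb 2 (fuzzyCard r (insert ok (O1.erase oi)) x / (n:ℝ))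
      = ∑ x ∈ O1.erase oi, Real.logb 2 ((fuzzyCard r O1 x - r x oi) / (n:ℝ)) :=
    Finset.sum_congr rfl (fun x hx => by rw [hcard_x x hx])
  rw [hA, hB, fuzzyEntropy, fuzzyEntropy, hcardB, ← hn,
    Finset.sum_insert hoknotin, hcard_ok, hsum2]
  have hinv : (0:ℝ) < 1 / (n:ℝ) := by positivity
  have := mul_lt_mul_of_pos_left key hinv
  linarith
end

section
/- Let O = O1 ∪ {o_k}, where O1 is a finite set with at least two elements, o_k ∉ O1, the fuzzy similarity relation r satisfies r(x,y) > 0 for all x, y ∈ O1 and r(x, o_k) = r(o_k, x) = 0 for all x ∈ O1. Fix o_i ∈ O1 and set O2 = O \ {o_i} and O3 = O1 \ {o_i} (so |O1| = |O2|). Then Σ_{o_l ∈ O3} log₂(|[o_l]|_{O1} / |O1|) > Σ_{o_l ∈ O3} log₂(|[o_l]|_{O2} / |O2|). -/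
open Finset

variable {α : Type*} [DecidableEq α]

/-- For `O = O1 ∪ {ok}`, `oi ∈ O1`, `O2 = O \ {oi}` and `O3 = O1 \ {oi}`,
`∑_{ol ∈ O3} log₂(|[ol]|_{O1}/|O1|) > ∑_{ol ∈ O3} log₂(|[ol]|_{O2}/|O2|)`. -/
theorem sum_logb_cluster_gt (r : α → α → ℝ) (O1 : Finset α) (ok : α)
    (hcard : 2 ≤ O1.card) (hok : ok ∉ O1)
    (hsymm : ∀ x y, r x y = r y x)
    (hrefl : ∀ x, r x x = 1)
    (hrange : ∀ x y, r x y ∈ Set.Icc (0 : ℝ) 1)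
    (hpos : ∀ x ∈ O1, ∀ y ∈ O1, 0 < r x y)
    (hzero : ∀ x ∈ O1, r x ok = 0 ∧ r ok x = 0) :
    ∀ oi ∈ O1,
      ∑ ol ∈ O1.erase oi,
          Real.logb 2 (fuzzyCard r ((insert ok O1).erase oi) ol
            / (((insert ok O1).erase oi).card : ℝ))
        < ∑ ol ∈ O1.erase oi,
            Real.logb 2 (fuzzyCard r O1 ol / (O1.card : ℝ)) := by
  intro oi hoi
  have hne : oi ≠ ok := fun h => hok (h ▸ hoi)
  have hset : (insert ok O1).erase oi = insert ok (O1.erase oi) :=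
    Finset.erase_insert_of_ne hne.symm
  have hcard2 : (((insert ok O1).erase oi).card : ℝ) = (O1.card : ℝ) := by
    rw [Finset.card_erase_of_mem (Finset.mem_insert_of_mem hoi),
      Finset.card_insert_of_notMem hok]
    simp
  have hn : (0 : ℝ) < O1.card := by
    have : 0 < O1.card := by omega
    exact_mod_cast this
  apply Finset.sum_lt_sum_of_nonempty
  · rw [← Finset.card_pos, Finset.card_erase_of_mem hoi]; omega
  · intro ol hol
    have hol1 : ol ∈ O1 := Finset.mem_of_mem_erase hol
    have hsumpos : 0 < ∑ y ∈ O1.erase oi, r ol y :=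
      Finset.sum_pos (fun y hy => hpos ol hol1 y (Finset.mem_of_mem_erase hy)) ⟨ol, hol⟩
    have hF2 : fuzzyCard r ((insert ok O1).erase oi) ol
        = ∑ y ∈ O1.erase oi, r ol y := by
      rw [hset]
      unfold fuzzyCard
      rw [Finset.sum_insert (fun h => hok (Finset.mem_of_mem_erase h)),
        (hzero ol hol1).1, zero_add]
    have hF1 : ∑ y ∈ O1.erase oi, r ol y < fuzzyCard r O1 ol := by
      unfold fuzzyCard
      rw [← Finset.sum_erase_add O1 _ hoi]
      have := hpos ol hol1 oi hoi
      linarith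
    rw [hF2, hcard2]
    exact Real.logb_lt_logb one_lt_two (div_pos hsumpos hn) (by gcongr)
end
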